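/- arXiv:1205.2856 — 2 statements merged into one kernel-verified Lean document; each statement's English description precedes it below -/
import Mathlib

section
/- Let κ : V(G) → ℕ and suppose v is a vertex of G with 0 ≤ κ(v) − deg_G(v) ≤ Σ_{u ∈ V(G)} κ(u) − |E(G)|. Then G is κ-degenerate if and only if G \ {v} is κ-degenerate (with κ restricted to V(G) \ {v}). -/
/-
Degeneracy orderings restrict to subsets: deleting vertices from an ordering can only shrink
the set of earlier neighbours of each remaining vertex. Conversely, a vertex `v` with
`deg v ≤ κ v` can be appended at the end of any ordering of the other vertices, since all of
its neighbours then precede it.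
-/

open Finset

/-- `D` is a `τ`-dynamic monopoly for `G`: there is a partition
`D₀ ∪ D₁ ∪ ⋯ ∪ D_k` of the vertex set with `D₀ = D` such that every vertex `v ∈ D_{i+1}`
has at least `τ v` neighbours in `D₀ ∪ ⋯ ∪ D_i`. -/
def DynMono {V : Type*} [Fintype V] [DecidableEq V] (G : SimpleGraph V) [DecidableRel G.Adj]
    (τ : V → ℤ) (D : Finset V) : Prop :=
  ∃ (k : ℕ) (Ds : ℕ → Finset V),
    Ds 0 = D ∧
    (∀ i ≤ k, ∀ j ≤ k, i ≠ j → Disjoint (Ds i) (Ds j)) ∧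
    (Finset.range (k + 1)).biUnion Ds = Finset.univ ∧
    (∀ i < k, ∀ v ∈ Ds (i + 1),
      τ v ≤ ((((Finset.range (i + 1)).biUnion Ds).filter (fun u => G.Adj v u)).card : ℤ))

/-- The induced subgraph of `G` on the vertex set `A` is `κ`-degenerate: the vertices of `A`
can be listed as `v₁, …, v_m` so that for each `i` the degree of `v_i` in the subgraph
induced on `{v₁, …, v_i}` is at most `κ v_i`. -/
def KDegenOn {V : Type*} [DecidableEq V] (G : SimpleGraph V) [DecidableRel G.Adj]
    (κ : V → ℕ) (A : Finset V) : Prop :=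
  ∃ l : List V, l.Nodup ∧ l.toFinset = A ∧
    ∀ i : Fin l.length,
      ((l.take i).filter (fun u => decide (G.Adj (l.get i) u))).length ≤ κ (l.get i)

/-- `G` is `k`-degenerate: every nonempty subgraph of `G` has a vertex of degree at most `k`. -/
def Degen {V : Type*} (G : SimpleGraph V) (k : ℕ) : Prop :=
  ∀ K : G.Subgraph, K.verts.Nonempty → ∃ v ∈ K.verts, (K.neighborSet v).ncard ≤ k

/-- The induced subgraph of `G` on the vertex set `A` is `k`-degenerate: every nonempty
subgraph of it (equivalently, every nonempty induced subgraph on some `S ⊆ A`) has a vertex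
of degree at most `k`. -/
def DegenOn {V : Type*} (G : SimpleGraph V) [DecidableRel G.Adj] (k : ℕ) (A : Finset V) : Prop :=
  ∀ S ⊆ A, S.Nonempty → ∃ v ∈ S, (S.filter (fun u => G.Adj v u)).card ≤ k

/-- A (nonempty) subgraph `K` of `G` is resistant w.r.t. the threshold assignment `τ` if
every vertex `v` of `K` satisfies `deg_K v ≥ deg_G v - τ v + 1`. -/
def Resistant {V : Type*} [Fintype V] (G : SimpleGraph V) [DecidableRel G.Adj]
    (τ : V → ℤ) (K : G.Subgraph) : Prop :=
  K.verts.Nonempty ∧ ∀ v ∈ K.verts, (G.degree v : ℤ) - τ v + 1 ≤ ((K.neighborSet v).ncard : ℤ)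

theorem List.Sublist.exists_get_eq_and_take_sublist {α : Type*} {l' l : List α}
    (h : l'.Sublist l) (i : Fin l'.length) :
    ∃ j : Fin l.length, l.get j = l'.get i ∧ (l'.take i).Sublist (l.take j) := by
  induction h with
  | slnil => exact i.elim0
  | cons a _ ih =>
    obtain ⟨j, hj, hs⟩ := ih i
    exact ⟨j.succ, by simpa using hj, hs.trans (List.sublist_cons_self a _)⟩
  | cons_cons a _ ih =>
    rcases i with ⟨_ | n, hi⟩
    · exact ⟨⟨0, by simp⟩, rfl, by simp⟩
    · obtain ⟨j, hj, hs⟩ := ih ⟨n, by simpa using hi⟩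
      exact ⟨j.succ, by simpa using hj, by simpa using hs.cons_cons a⟩

section KDegenOn

variable {V : Type*} [DecidableEq V] {G : SimpleGraph V} [DecidableRel G.Adj] {κ : V → ℕ}
  {A B : Finset V}

theorem KDegenOn.mono (hA : KDegenOn G κ A) (hBA : B ⊆ A) : KDegenOn G κ B := by
  obtain ⟨l, hnodup, hl, hdeg⟩ := hA
  refine ⟨l.filter (· ∈ B), hnodup.filter _, ?_, fun i => ?_⟩
  · rw [List.toFinset_filter, hl]
    ext u
    simpa using fun hu => hBA hu
  · obtain ⟨j, hj, hs⟩ := (List.filter_sublist (p := (· ∈ B))).exists_get_eq_and_take_sublist i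
    rw [← hj]
    exact (hs.filter _).length_le.trans (hdeg j)

theorem KDegenOn.insert {v : V} (hA : KDegenOn G κ A) (hvA : v ∉ A)
    (hv : #{u ∈ A | G.Adj v u} ≤ κ v) : KDegenOn G κ (insert v A) := by
  obtain ⟨l, hnodup, hl, hdeg⟩ := hA
  have hvl : v ∉ l := by simpa [← hl] using hvA
  refine ⟨l ++ [v], ?_, ?_, fun i => ?_⟩
  · simp only [List.nodup_append, hnodup, List.nodup_singleton, List.mem_singleton, true_and]
    rintro a ha _ rfl rfl
    exact hvl ha
  · ext u
    simp [← hl]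
  have hi : i.val ≤ l.length := Nat.lt_succ_iff.mp (by simpa using i.isLt)
  rcases hi.lt_or_eq with hi | hi
  · have hget : (l ++ [v]).get i = l.get ⟨i, hi⟩ := List.getElem_append_left hi
    rw [hget, List.take_append_of_le_length hi.le]
    exact hdeg ⟨i, hi⟩
  · have hget : (l ++ [v]).get i = v := by simp [hi]
    have hearlier : (l.filter (fun u => decide (G.Adj v u))).length = #{u ∈ A | G.Adj v u} := by
      rw [← List.toFinset_card_of_nodup (hnodup.filter _), List.toFinset_filter, hl]
      simp
    rw [hget, hi, List.take_left, hearlier]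
    exact hv

end KDegenOn

theorem stmt7_general {V : Type*} [Fintype V] [DecidableEq V] (G : SimpleGraph V) [DecidableRel G.Adj]
    (κ : V → ℕ) (v : V)
    (hv₁ : 0 ≤ (κ v : ℤ) - G.degree v) :
    KDegenOn G κ Finset.univ ↔ KDegenOn G κ (Finset.univ.erase v) := by
  refine ⟨fun h => h.mono (erase_subset v univ), fun h => ?_⟩
  have hneighbours : #{u ∈ univ.erase v | G.Adj v u} ≤ κ v :=
    calc #{u ∈ univ.erase v | G.Adj v u}
      _ ≤ #{u | G.Adj v u} := card_le_card (filter_subset_filter _ (erase_subset v univ))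
      _ = G.degree v := by rw [← G.card_neighborFinset_eq_degree, G.neighborFinset_eq_filter]
      _ ≤ κ v := by omega
  simpa [insert_erase (mem_univ v)] using h.insert (notMem_erase v univ) hneighbours

theorem stmt7 {V : Type*} [Fintype V] [DecidableEq V] (G : SimpleGraph V) [DecidableRel G.Adj]
    (κ : V → ℕ) (v : V)
    (hv₁ : 0 ≤ (κ v : ℤ) - G.degree v)
    (hv₂ : (κ v : ℤ) - G.degree v ≤ (∑ u : V, (κ u : ℤ)) - G.edgeFinset.card) :
    KDegenOn G κ Finset.univ ↔ KDegenOn G κ (Finset.univ.erase v) :=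
  stmt7_general G κ v hv₁
end

section
/- Let G be an r-regular graph on n vertices and let α_k(G) denote the maximum number of vertices of a k-degenerate induced subgraph of G, where 0 ≤ k < r. Then α_k(G) ≥ (k+1)n/(r+1). -/
open Finset

/-!
Order the vertices uniformly at random and keep those with at most `k` earlier neighbours. The
kept set is `k`-degenerate: in any subset of it, the last vertex has all its neighbours in the
subset among its earlier neighbours. In an `r`-regular graph the position of `v` within its
closed neighbourhood (of `r + 1` vertices) is uniformly distributed, because swapping `v` with a
neighbour is a bijection on orderings; so `v` is kept with probability `(k + 1) / (r + 1)`, and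
some ordering keeps at least the expected number `(k + 1) n / (r + 1)` of vertices.
-/

section Rank

variable {V α : Type*} [LinearOrder α]

def rankIn (S : Finset V) (f : V → α) (u : V) : ℕ := #{w ∈ S | f w < f u}

lemma rankIn_lt_rankIn {S : Finset V} {f : V → α} {u u' : V} (hu : u ∈ S) (h : f u < f u') :
    rankIn S f u < rankIn S f u' := by
  refine card_lt_card ⟨fun w hw => ?_, fun hsub => ?_⟩
  · simp only [mem_filter] at hw ⊢
    exact ⟨hw.1, hw.2.trans h⟩
  · exact lt_irrefl _ (mem_filter.1 (hsub (mem_filter.2 ⟨hu, h⟩))).2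

lemma rankIn_injOn {S : Finset V} {f : V → α} (hf : Function.Injective f) :
    Set.InjOn (rankIn S f) S := by
  intro u hu u' hu' h
  rcases lt_trichotomy (f u) (f u') with hlt | heq | hgt
  · exact absurd h (rankIn_lt_rankIn hu hlt).ne
  · exact hf heq
  · exact absurd h (rankIn_lt_rankIn hu' hgt).ne'

lemma image_rankIn {S : Finset V} {f : V → α} (hf : Function.Injective f) :
    S.image (rankIn S f) = range #S := by
  refine eq_of_subset_of_card_le (fun i hi => ?_) ?_
  · obtain ⟨u, hu, rfl⟩ := mem_image.1 hi
    exact mem_range.2 (card_lt_card (filter_ssubset.2 ⟨u, hu, lt_irrefl _⟩))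
  · rw [card_range, card_image_of_injOn (rankIn_injOn hf)]

lemma card_filter_rankIn_le {S : Finset V} {f : V → α} (hf : Function.Injective f) {k : ℕ}
    (hk : k < #S) : #{u ∈ S | rankIn S f u ≤ k} = k + 1 := by
  have himage : {u ∈ S | rankIn S f u ≤ k}.image (rankIn S f) = range (k + 1) := by
    rw [← filter_image (p := (· ≤ k)), image_rankIn hf]
    ext i
    simp only [mem_filter, mem_range]
    omega
  rw [← card_image_of_injOn ((rankIn_injOn hf).mono (filter_subset _ S)), himage, card_range]

lemma rankIn_comp_perm {S : Finset V} {τ : Equiv.Perm V} (hτ : ∀ w, τ w ∈ S ↔ w ∈ S)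
    (f : V → α) (u : V) : rankIn S (f ∘ τ) u = rankIn S f (τ u) :=
  card_equiv τ fun w => by simp only [mem_filter, Function.comp, hτ]

variable [DecidableEq V] [Fintype V] [Fintype α]

lemma card_rankIn_eq_of_mem {S : Finset V} {u v : V} (hu : u ∈ S) (hv : v ∈ S) (p : ℕ → Prop)
    [DecidablePred p] :
    #{σ : V ≃ α | p (rankIn S σ v)} = #{σ : V ≃ α | p (rankIn S σ u)} := by
  have hswap : ∀ w, Equiv.swap u v w ∈ S ↔ w ∈ S := fun w => by
    rcases eq_or_ne w u with rfl | hwu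
    · simp [hu, hv]
    rcases eq_or_ne w v with rfl | hwv
    · simp [hu, hv]
    · rw [Equiv.swap_apply_of_ne_of_ne hwu hwv]
  -- precomposing an ordering with the transposition `(u v)` exchanges the ranks of `u` and `v`
  refine card_equiv ((Equiv.swap u v).equivCongr (Equiv.refl α)) fun σ => ?_
  have hσ : ⇑((Equiv.swap u v).equivCongr (Equiv.refl α) σ) = σ ∘ Equiv.swap u v := by
    ext w
    simp [Equiv.equivCongr_apply_apply]
  simp only [mem_filter, mem_univ, true_and, hσ, rankIn_comp_perm hswap, Equiv.swap_apply_left]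

lemma card_mul_card_rankIn_le {S : Finset V} {v : V} (hv : v ∈ S) {k : ℕ} (hk : k < #S) :
    #S * #{σ : V ≃ α | rankIn S σ v ≤ k} = (k + 1) * Fintype.card (V ≃ α) := calc
  #S * #{σ : V ≃ α | rankIn S σ v ≤ k}
    = ∑ u ∈ S, #{σ : V ≃ α | rankIn S σ u ≤ k} := by
      rw [sum_congr rfl fun u hu => (card_rankIn_eq_of_mem hu hv (· ≤ k)).symm, sum_const,
        smul_eq_mul]
  _ = ∑ σ : V ≃ α, #{u ∈ S | rankIn S σ u ≤ k} :=
      sum_card_bipartiteAbove_eq_sum_card_bipartiteBelow (fun u (σ : V ≃ α) => rankIn S σ u ≤ k)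
  _ = (k + 1) * Fintype.card (V ≃ α) := by
      rw [sum_congr rfl fun σ _ => card_filter_rankIn_le σ.injective hk, sum_const, card_univ,
        smul_eq_mul, mul_comm]

end Rank

section BackDegree

variable {V α : Type*} [Fintype V] [LinearOrder α] (G : SimpleGraph V) [DecidableRel G.Adj]

def backDegree (f : V → α) (v : V) : ℕ := #{u ∈ G.neighborFinset v | f u < f v}

lemma degenOn_backDegree_le {f : V → α} (hf : Function.Injective f) (k : ℕ) :
    DegenOn G k {v | backDegree G f v ≤ k} := by
  intro S hS hSne
  obtain ⟨v, hvS, hmax⟩ := S.exists_max_image f hSne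
  refine ⟨v, hvS, (card_le_card fun u hu => ?_).trans (mem_filter.1 (hS hvS)).2⟩
  obtain ⟨huS, hvu⟩ := mem_filter.1 hu
  exact mem_filter.2 ⟨(G.mem_neighborFinset v u).2 hvu,
    (hmax u huS).lt_of_ne fun h => hvu.ne (hf h).symm⟩

variable [DecidableEq V]

lemma backDegree_eq_rankIn (f : V → α) (v : V) :
    backDegree G f v = rankIn (insert v (G.neighborFinset v)) f v := by
  rw [backDegree, rankIn, filter_insert, if_neg (lt_irrefl _)]

lemma exists_card_backDegree_le {r : ℕ} (hreg : G.IsRegularOfDegree r) {k : ℕ} (hk : k ≤ r) :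
    ∃ σ : V ≃ Fin (Fintype.card V),
      (k + 1) * Fintype.card V ≤ (r + 1) * #{v | backDegree G σ v ≤ k} := by
  have hcard : ∀ v, #(insert v (G.neighborFinset v)) = r + 1 := fun v => by
    rw [card_insert_of_notMem (G.notMem_neighborFinset_self v), G.card_neighborFinset_eq_degree,
      hreg v]
  have hsum : ∑ σ : V ≃ Fin (Fintype.card V), (r + 1) * #{v | backDegree G σ v ≤ k}
      = ∑ _σ : V ≃ Fin (Fintype.card V), (k + 1) * Fintype.card V := calc
    _ = ∑ v, (r + 1) * #{σ : V ≃ Fin (Fintype.card V) | backDegree G σ v ≤ k} := by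
      rw [← mul_sum, ← mul_sum]
      exact congrArg _ (sum_card_bipartiteAbove_eq_sum_card_bipartiteBelow
        (fun (σ : V ≃ Fin (Fintype.card V)) v => backDegree G σ v ≤ k))
    _ = ∑ _v : V, (k + 1) * Fintype.card (V ≃ Fin (Fintype.card V)) := by
      refine sum_congr rfl fun v _ => ?_
      simp only [backDegree_eq_rankIn, ← hcard v]
      exact card_mul_card_rankIn_le (mem_insert_self v _) (by rw [hcard]; omega)
    _ = _ := by simp only [sum_const, card_univ, smul_eq_mul]; ring
  obtain ⟨σ, -, hσ⟩ := exists_le_of_sum_le ⟨Fintype.equivFin V, mem_univ _⟩ hsum.ge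
  exact ⟨σ, hσ⟩

end BackDegree

theorem stmt14 {V : Type*} [Fintype V] [DecidableEq V] (G : SimpleGraph V) [DecidableRel G.Adj]
    (r k : ℕ) (hreg : G.IsRegularOfDegree r) (hk : k < r) :
    ∃ H : Finset V, DegenOn G k H ∧
      ((k : ℚ) + 1) * Fintype.card V / ((r : ℚ) + 1) ≤ H.card := by
  obtain ⟨σ, hσ⟩ := exists_card_backDegree_le G hreg hk.le
  refine ⟨_, degenOn_backDegree_le G σ.injective k, ?_⟩
  rw [div_le_iff₀ (by positivity), mul_comm _ ((r : ℚ) + 1)]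
  exact_mod_cast hσ
end
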